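/- Let κ ∈ (0,1), ζ ∈ (0,1), and let (α_k)_{k∈ℕ} be positive reals with α_k = Θ((k+1)^{−1}). Define b_k := Σ_{i=0}^{k} κ^{k−i} α_i, b_{−1} := 0, and T(k) := the least i ≤ k such that κ^{k−j} b_j ≥ b_k^{1+ζ} for all j ∈ [i, k]. Let L > 0 and let (x_k)_{k∈ℕ} ⊂ ℝⁿ and (v_k)_{k∈ℕ} ⊂ ℝⁿ satisfy |v_k| ≤ L for all k and x_{k+1} − x_k = −Σ_{i=0}^{k} κ^{k−i} α_i v_i for all k ≥ 0. Then: (1) k − T(k) = O(log(k+2)); and (2) for every ξ ∈ (0,1) there exists C_ξ > 0 such that for all sufficiently large k and all i ∈ [T(k), k], one has |x_i − x_k| ≤ C_ξ b_k^{ξ}. -/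

import Mathlib

/-!
Since `α_k ≍ 1/k`, the discounted sums satisfy `b_k ≍ 1/k`: the lower bound is `b_k ≥ α_k`, and
the upper bound follows from `(k+1)/(i+1) ≤ k-i+1`, which dominates `(k+1) b_k` by `∑ (j+1) κ^j`.
Since `b` is bounded while `b_k^{1+ζ} ≥ b_k² ≳ k⁻²`, the window condition fails at `j = k - m` as
soon as `κ^m ≲ k⁻³`, i.e. for `m ≈ 3 log k / |log κ|`; hence `k - T(k) = O(log k)`. In particular
`T(k) ≥ k/2`, so `b = O(1/k)` on the window, and summing the steps `|x_{l+1} - x_l| ≤ L b_l` over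
it gives `|x_i - x_k| = O(log k / k) = O(k^{-ξ}) = O(b_k^ξ)`.
-/

open Filter Finset Real

noncomputable def discountedSum (κ : ℝ) (α : ℕ → ℝ) (k : ℕ) : ℝ :=
  ∑ i ∈ range (k + 1), κ ^ (k - i) * α i

/-- `sInf ∅ = 0`, but `k` itself lies in the set as soon as `b k ≤ 1`. -/
noncomputable def recentWindowStart (κ ζ : ℝ) (b : ℕ → ℝ) (k : ℕ) : ℕ :=
  sInf {i : ℕ | i ≤ k ∧ ∀ j, i ≤ j → j ≤ k → b k ^ (1 + ζ) ≤ κ ^ (k - j) * b j}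

section DiscountedSum

variable {κ : ℝ} {α : ℕ → ℝ}

theorem le_discountedSum (hκ : 0 ≤ κ) (hα : ∀ i, 0 ≤ α i) (k : ℕ) :
    α k ≤ discountedSum κ α k := by
  simpa [discountedSum] using single_le_sum (f := fun i => κ ^ (k - i) * α i)
    (fun i _ => mul_nonneg (pow_nonneg hκ _) (hα i)) (self_mem_range_succ k)

theorem discountedSum_le_div_succ {M : ℝ} (hκ0 : 0 ≤ κ) (hκ1 : κ < 1) (hα : ∀ i, 0 ≤ α i)
    (hαM : ∀ i : ℕ, ((i : ℝ) + 1) * α i ≤ M) (k : ℕ) :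
    discountedSum κ α k ≤ M / (1 - κ) ^ 2 / ((k : ℝ) + 1) := by
  have hgeom : HasSum (fun j : ℕ => ((j : ℝ) + 1) * κ ^ j) (1 / (1 - κ) ^ 2) := by
    simpa using hasSum_choose_mul_geometric_of_norm_lt_one 1 (r := κ)
      (by rwa [Real.norm_of_nonneg hκ0])
  -- `k + 1 ≤ (k - i + 1) (i + 1)` moves the decay `1 / (i + 1)` of `α i` onto the geometric weight
  have hterm : ∀ i ∈ range (k + 1), ((k : ℝ) + 1) * (κ ^ (k - i) * α i) ≤
      M * ((((k - i : ℕ) : ℝ) + 1) * κ ^ (k - i)) := by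
    intro i hi
    have hik : i ≤ k := Nat.lt_succ_iff.mp (mem_range.mp hi)
    have hsplit : (k : ℝ) + 1 ≤ (((k - i : ℕ) : ℝ) + 1) * ((i : ℝ) + 1) := by
      rw [Nat.cast_sub hik]
      nlinarith [(Nat.cast_le (α := ℝ)).2 hik, (i.cast_nonneg : (0 : ℝ) ≤ i)]
    calc ((k : ℝ) + 1) * (κ ^ (k - i) * α i)
        ≤ (((k - i : ℕ) : ℝ) + 1) * ((i : ℝ) + 1) * (κ ^ (k - i) * α i) := by
          gcongr
          exact mul_nonneg (pow_nonneg hκ0 _) (hα i)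
      _ = (((k - i : ℕ) : ℝ) + 1) * κ ^ (k - i) * (((i : ℝ) + 1) * α i) := by ring
      _ ≤ (((k - i : ℕ) : ℝ) + 1) * κ ^ (k - i) * M := by gcongr; exact hαM i
      _ = M * ((((k - i : ℕ) : ℝ) + 1) * κ ^ (k - i)) := by ring
  rw [le_div_iff₀' (by positivity)]
  calc ((k : ℝ) + 1) * discountedSum κ α k
      = ∑ i ∈ range (k + 1), ((k : ℝ) + 1) * (κ ^ (k - i) * α i) := mul_sum _ _ _
    _ ≤ ∑ i ∈ range (k + 1), M * ((((k - i : ℕ) : ℝ) + 1) * κ ^ (k - i)) := sum_le_sum hterm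
    _ = M * ∑ j ∈ range (k + 1), ((j : ℝ) + 1) * κ ^ j := by
      rw [← mul_sum, ← sum_range_reflect (fun j : ℕ => ((j : ℝ) + 1) * κ ^ j) (k + 1)]
      simp only [add_tsub_cancel_right]
    _ ≤ M * (1 / (1 - κ) ^ 2) := by
      have hM : 0 ≤ M := (mul_nonneg (by positivity) (hα 0)).trans (hαM 0)
      gcongr
      exact sum_le_hasSum _ (fun j _ => by positivity) hgeom
    _ = M / (1 - κ) ^ 2 := by ring

theorem exists_discountedSum_le_div_succ {c : ℝ} (hκ0 : 0 ≤ κ) (hκ1 : κ < 1) (hα : ∀ i, 0 < α i)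
    (hαc : ∀ᶠ k : ℕ in atTop, ((k : ℝ) + 1) * α k ≤ c) :
    ∃ C > (0 : ℝ), ∀ k : ℕ, discountedSum κ α k ≤ C / ((k : ℝ) + 1) := by
  obtain ⟨M, hM⟩ := (isBoundedUnder_of_eventually_le hαc).bddAbove_range
  have hαM : ∀ i : ℕ, ((i : ℝ) + 1) * α i ≤ M := fun i => hM (Set.mem_range_self i)
  have hM0 : 0 < M := by
    have h0 := hαM 0
    norm_num at h0
    exact (hα 0).trans_le h0
  have := sub_pos.2 hκ1
  exact ⟨M / (1 - κ) ^ 2, by positivity,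
    discountedSum_le_div_succ hκ0 hκ1 (fun i => (hα i).le) hαM⟩

theorem norm_sum_smul_le_mul_discountedSum {E : Type*} [SeminormedAddCommGroup E]
    [NormedSpace ℝ E] {v : ℕ → E} {L : ℝ} (hκ : 0 ≤ κ) (hα : ∀ i, 0 ≤ α i)
    (hv : ∀ i, ‖v i‖ ≤ L) (k : ℕ) :
    ‖∑ i ∈ range (k + 1), (κ ^ (k - i) * α i) • v i‖ ≤ L * discountedSum κ α k := by
  rw [discountedSum, mul_sum]
  refine norm_sum_le_of_le _ fun i _ => ?_
  have hw : 0 ≤ κ ^ (k - i) * α i := mul_nonneg (pow_nonneg hκ _) (hα i)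
  rw [norm_smul, Real.norm_of_nonneg hw, mul_comm L]
  exact mul_le_mul_of_nonneg_left (hv i) hw

end DiscountedSum

theorem lt_recentWindowStart_add {κ ζ C : ℝ} {b : ℕ → ℝ} {k m : ℕ} (hκ : 0 ≤ κ) (hζ : 0 ≤ ζ)
    (hbk0 : 0 ≤ b k) (hbk1 : b k ≤ 1) (hbC : ∀ j, b j ≤ C) (hm : C * κ ^ m < b k ^ (1 + ζ)) :
    k < recentWindowStart κ ζ b k + m := by
  rcases lt_or_ge k m with hkm | hmk
  · omega
  have hk : k ∈ {i : ℕ | i ≤ k ∧ ∀ j, i ≤ j → j ≤ k → b k ^ (1 + ζ) ≤ κ ^ (k - j) * b j} := by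
    refine ⟨le_rfl, fun j hkj hjk => ?_⟩
    obtain rfl := le_antisymm hjk hkj
    simpa using rpow_le_self_of_le_one hbk0 hbk1 (by linarith)
  by_contra! hle
  have hfail := (Nat.sInf_mem ⟨k, hk⟩).2 (k - m) (by unfold recentWindowStart at hle; omega)
    (Nat.sub_le k m)
  rw [Nat.sub_sub_self hmk] at hfail
  nlinarith [mul_le_mul_of_nonneg_left (hbC (k - m)) (pow_nonneg hκ m)]

theorem eventually_lt_natCast_add_one (x : ℝ) : ∀ᶠ k : ℕ in atTop, x < (k : ℝ) + 1 :=
  (tendsto_natCast_atTop_atTop.eventually_gt_atTop x).mono fun _ hk => by linarith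

theorem exists_sub_recentWindowStart_le_mul_log {κ ζ c C : ℝ} {b : ℕ → ℝ} (hκ0 : 0 < κ)
    (hκ1 : κ < 1) (hζ0 : 0 ≤ ζ) (hζ1 : ζ ≤ 1) (hc : 0 < c) (hC : 0 ≤ C)
    (hupper : ∀ k : ℕ, b k ≤ C / ((k : ℝ) + 1))
    (hlower : ∀ᶠ k : ℕ in atTop, c / ((k : ℝ) + 1) ≤ b k) :
    ∃ A > (0 : ℝ), ∀ᶠ k : ℕ in atTop,
      (k : ℝ) - recentWindowStart κ ζ b k ≤ A * log ((k : ℝ) + 1) := by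
  have hr : 0 < -log κ := neg_pos.2 (log_neg hκ0 hκ1)
  have hbC : ∀ j : ℕ, b j ≤ C := fun j =>
    (hupper j).trans (div_le_self hC (by linarith [j.cast_nonneg (α := ℝ)]))
  refine ⟨3 / -log κ + 1, by positivity, ?_⟩
  filter_upwards [hlower, eventually_lt_natCast_add_one C,
    eventually_lt_natCast_add_one (C / c ^ 2), eventually_lt_natCast_add_one (exp 1)]
    with k hlow hCy hCcy hey
  set y : ℝ := (k : ℝ) + 1
  have hy : 0 < y := by positivity
  set m := ⌈3 * log y / -log κ⌉₊
  have hbk0 : 0 ≤ b k := (by positivity : 0 ≤ c / y).trans hlow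
  have hbk1 : b k ≤ 1 := (hupper k).trans ((div_le_one hy).2 hCy.le)
  -- the choice of `m` makes `κ ^ m ≤ y⁻³`, far below `b k ^ (1 + ζ) ≥ (c / y)²`
  have hκm : κ ^ m ≤ 1 / y ^ 3 := by
    have hm : 3 * log y ≤ m * -log κ := (div_le_iff₀ hr).1 (Nat.le_ceil _)
    calc κ ^ m = exp (log κ * m) := by rw [← rpow_natCast, rpow_def_of_pos hκ0]
      _ ≤ exp (log y * -3) := exp_le_exp.2 (by linarith)
      _ = 1 / y ^ 3 := by rw [← rpow_def_of_pos hy, rpow_neg hy.le]; norm_num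
  have hfail : C * κ ^ m < b k ^ (1 + ζ) := by
    calc C * κ ^ m ≤ C * (1 / y ^ 3) := by gcongr
      _ < c ^ 2 / y ^ 2 := by
        rw [div_lt_iff₀ (by positivity)] at hCcy
        rw [mul_one_div, div_lt_div_iff₀ (by positivity) (by positivity)]
        calc C * y ^ 2 < y * c ^ 2 * y ^ 2 := by gcongr
          _ = c ^ 2 * y ^ 3 := by ring
      _ = (c / y) ^ (2 : ℝ) := by rw [rpow_two, div_pow]
      _ ≤ b k ^ (2 : ℝ) := by gcongr
      _ ≤ b k ^ (1 + ζ) := rpow_le_rpow_of_exponent_ge' hbk0 hbk1 (by linarith) (by linarith)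
  have hwin : (k : ℝ) < recentWindowStart κ ζ b k + m := by
    exact_mod_cast lt_recentWindowStart_add hκ0.le hζ0 hbk0 hbk1 hbC hfail
  have hlog : 1 ≤ log y := (le_log_iff_exp_le hy).2 hey.le
  have hm : (m : ℝ) < 3 * log y / -log κ + 1 := Nat.ceil_lt_add_one (by positivity)
  have : 3 * log y / -log κ + 1 ≤ (3 / -log κ + 1) * log y := by
    rw [add_mul, div_mul_eq_mul_div]; linarith
  linarith

theorem eventually_mul_log_le_half (A : ℝ) :
    ∀ᶠ k : ℕ in atTop, A * log ((k : ℝ) + 1) ≤ ((k : ℝ) + 1) / 2 := by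
  have hε : (0 : ℝ) < 1 / (2 * (|A| + 1)) := by positivity
  filter_upwards [(tendsto_atTop_add_const_right _ 1 tendsto_natCast_atTop_atTop).eventually
    (isLittleO_log_id_atTop.bound hε), eventually_lt_natCast_add_one 0] with k hk hy
  rw [id, norm_of_nonneg hy.le] at hk
  have hAlog : A * log ((k : ℝ) + 1) ≤ (|A| + 1) * ‖log ((k : ℝ) + 1)‖ :=
    (le_abs_self _).trans (by rw [abs_mul, ← norm_eq_abs (log _)]; gcongr; linarith)
  calc A * log ((k : ℝ) + 1) ≤ (|A| + 1) * (1 / (2 * (|A| + 1)) * ((k : ℝ) + 1)) :=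
        hAlog.trans (by gcongr)
    _ = ((k : ℝ) + 1) / 2 := by field_simp

theorem exists_norm_sub_le_mul_rpow {E : Type*} [SeminormedAddCommGroup E] {x : ℕ → E}
    {b : ℕ → ℝ} {T : ℕ → ℕ} {L c C A ξ : ℝ} (hL : 0 < L) (hc : 0 < c) (hC : 0 < C) (hA : 0 < A)
    (hξ : ξ ∈ Set.Ioo (0 : ℝ) 1) (hstep : ∀ l, ‖x (l + 1) - x l‖ ≤ L * b l)
    (hupper : ∀ l : ℕ, b l ≤ C / ((l : ℝ) + 1))
    (hlower : ∀ᶠ k : ℕ in atTop, c / ((k : ℝ) + 1) ≤ b k)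
    (hwindow : ∀ᶠ k : ℕ in atTop, (k : ℝ) - T k ≤ A * log ((k : ℝ) + 1)) :
    ∃ Cξ > (0 : ℝ), ∀ᶠ k : ℕ in atTop, ∀ i, T k ≤ i → i ≤ k → ‖x i - x k‖ ≤ Cξ * b k ^ ξ := by
  obtain ⟨hξ0, hξ1⟩ := hξ
  refine ⟨2 * L * C * A / ((1 - ξ) * c ^ ξ), by have := sub_pos.2 hξ1; positivity, ?_⟩
  filter_upwards [hlower, hwindow, eventually_mul_log_le_half A] with k hlow hwin hhalf i hTi hik
  set y : ℝ := (k : ℝ) + 1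
  have hy : 0 < y := by positivity
  -- the window has length `O(log k) ≤ k / 2`, so `b` is `O(1 / k)` on all of it
  have hb_window : ∀ l, T k ≤ l → b l ≤ 2 * C / y := by
    intro l hl
    have : y / 2 ≤ (l : ℝ) + 1 := by
      have : (T k : ℝ) ≤ l := by exact_mod_cast hl
      linarith
    calc b l ≤ C / ((l : ℝ) + 1) := hupper l
      _ ≤ C / (y / 2) := by gcongr
      _ = 2 * C / y := by field_simp
  have hdist : ‖x i - x k‖ ≤ ((k : ℝ) - i) * (L * (2 * C / y)) := by
    rw [← dist_eq_norm]
    calc dist (x i) (x k) ≤ ∑ _l ∈ Ico i k, L * (2 * C / y) :=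
          dist_le_Ico_sum_of_dist_le hik fun {l} hl _ => by
            rw [dist_comm, dist_eq_norm]
            exact (hstep l).trans (by gcongr; exact hb_window l (hTi.trans hl))
      _ = ((k : ℝ) - i) * (L * (2 * C / y)) := by
        rw [sum_const, Nat.card_Ico, nsmul_eq_mul, Nat.cast_sub hik]
  have hki : (k : ℝ) - i ≤ A * log y := by
    have : (T k : ℝ) ≤ i := by exact_mod_cast hTi
    linarith
  calc ‖x i - x k‖ ≤ ((k : ℝ) - i) * (L * (2 * C / y)) := hdist
    _ ≤ A * log y * (L * (2 * C / y)) := by gcongr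
    _ ≤ A * (y ^ (1 - ξ) / (1 - ξ)) * (L * (2 * C / y)) := by
        gcongr
        exact log_le_rpow_div hy.le (by linarith)
    _ = 2 * L * C * A / ((1 - ξ) * c ^ ξ) * (c ^ ξ / y ^ ξ) := by
        rw [rpow_sub hy, rpow_one]
        have := sub_pos.2 hξ1
        field_simp
    _ ≤ 2 * L * C * A / ((1 - ξ) * c ^ ξ) * b k ^ ξ := by
        rw [← div_rpow hc.le hy.le]
        gcongr

/-- For the momentum method, the recent-window length satisfies
`k - T(k) = O(log(k+2))`, and within the recent window the iterates stay within
`C_ξ b_k^ξ` of `x_k`, for every `ξ ∈ (0,1)`. -/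
theorem momentum_recent_window_iterates {n : ℕ} (κ ζ : ℝ)
    (hκ : κ ∈ Set.Ioo (0 : ℝ) 1) (hζ : ζ ∈ Set.Ioo (0 : ℝ) 1)
    (α : ℕ → ℝ) (hαpos : ∀ k, 0 < α k)
    (hΘ : ∃ c₁ c₂ : ℝ, ∃ N : ℕ, 0 < c₁ ∧ c₁ ≤ c₂ ∧ ∀ k ≥ N,
      c₁ / ((k : ℝ) + 1) ≤ α k ∧ α k ≤ c₂ / ((k : ℝ) + 1))
    (b : ℕ → ℝ) (hb : ∀ k, b k = ∑ i ∈ Finset.range (k + 1), κ ^ (k - i) * α i)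
    (T : ℕ → ℕ)
    (hT : ∀ k, T k = sInf {i : ℕ | i ≤ k ∧ ∀ j, i ≤ j → j ≤ k →
      b k ^ (1 + ζ) ≤ κ ^ (k - j) * b j})
    (L : ℝ) (hL : 0 < L)
    (x v : ℕ → EuclideanSpace ℝ (Fin n))
    (hv : ∀ k, ‖v k‖ ≤ L)
    (hx : ∀ k, x (k + 1) - x k = -∑ i ∈ Finset.range (k + 1), (κ ^ (k - i) * α i) • v i) :
    (∃ C > (0 : ℝ), ∃ K : ℕ, ∀ k ≥ K,
      ((k : ℝ) - (T k : ℝ)) ≤ C * Real.log ((k : ℝ) + 2)) ∧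
    (∀ ξ ∈ Set.Ioo (0 : ℝ) 1, ∃ Cξ > (0 : ℝ), ∃ K : ℕ, ∀ k ≥ K, ∀ i, T k ≤ i → i ≤ k →
      ‖x i - x k‖ ≤ Cξ * b k ^ ξ) := by
  obtain ⟨hκ0, hκ1⟩ := hκ
  obtain ⟨c₁, c₂, N, hc₁, -, hαΘ⟩ := hΘ
  obtain rfl : b = discountedSum κ α := funext hb
  obtain rfl : T = recentWindowStart κ ζ (discountedSum κ α) := funext hT
  obtain ⟨C, hC, hupper⟩ := exists_discountedSum_le_div_succ hκ0.le hκ1 hαpos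
    (c := c₂) (eventually_atTop.2 ⟨N, fun k hk => by
      simpa only [le_div_iff₀ (by positivity : (0 : ℝ) < k + 1), mul_comm] using (hαΘ k hk).2⟩)
  have hlower : ∀ᶠ k : ℕ in atTop, c₁ / ((k : ℝ) + 1) ≤ discountedSum κ α k :=
    eventually_atTop.2 ⟨N, fun k hk =>
      (hαΘ k hk).1.trans (le_discountedSum hκ0.le (fun i => (hαpos i).le) k)⟩
  obtain ⟨A, hA, hwindow⟩ := exists_sub_recentWindowStart_le_mul_log hκ0 hκ1 hζ.1.le hζ.2.le
    hc₁ hC.le hupper hlower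
  have hstep : ∀ l, ‖x (l + 1) - x l‖ ≤ L * discountedSum κ α l := fun l => by
    rw [hx l, norm_neg]
    exact norm_sum_smul_le_mul_discountedSum hκ0.le (fun i => (hαpos i).le) hv l
  refine ⟨⟨A, hA, eventually_atTop.1 (hwindow.mono fun k hk => hk.trans ?_)⟩, fun ξ hξ => ?_⟩
  · gcongr
    linarith
  · obtain ⟨Cξ, hCξ, h⟩ :=
      exists_norm_sub_le_mul_rpow hL hc₁ hC hA hξ hstep hupper hlower hwindow
    exact ⟨Cξ, hCξ, eventually_atTop.1 h⟩
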